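/- Let N_p0 be an integer with N_p0 ≡ K (mod 2) and K ≤ N_p0 ≤ K·3^{m-1}, and set χ = χ(N_p0, K). Define the vector p' = (p'_0, …, p'_{m-1}) by p'_i = Σ_{s=0}^{i} K·3^s − (N_p0 − K)/2 if i = χ; p'_i = 3·((N_p0 − K)/2 − Σ_{s=0}^{i-2} K·3^s) if i = χ + 1 and χ + 1 ≤ m − 1; and p'_i = 0 otherwise. Then p' ∈ Ω(N_p0, K), and C_sum(p) ≤ C_sum(p') for every p ∈ Ω(N_p0, K) (Theorem 3). -/

import Mathlib

/-- A pilot assignment vector `p = (p_0, …, p_{m-1})` for `K` users per cell is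
valid if `0 ≤ p_i ≤ K·3^i` for every `i` and `Σ_i p_i · 3^{-i} = K`. -/
def validPK {m : ℕ} (K : ℕ) (p : Fin m → ℤ) : Prop :=
  (∀ i, 0 ≤ p i ∧ p i ≤ (K : ℤ) * 3 ^ (i : ℕ)) ∧
  (∑ i, (p i : ℝ) / 3 ^ (i : ℕ)) = (K : ℝ)

/-- The pilot length `N_pil(p) = Σ_i p_i`. -/
def Npil {m : ℕ} (p : Fin m → ℤ) : ℤ := ∑ i, p i

/-- The per-cell sum rate `C_sum(p) = Σ_i 3^{-i}·p_i·C_i` with `C_i = C_0 + i·d`. -/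
noncomputable def Csum {m : ℕ} (C0 d : ℝ) (p : Fin m → ℤ) : ℝ :=
  ∑ i, (p i : ℝ) / 3 ^ (i : ℕ) * (C0 + (i : ℕ) * d)

/-- `χ(N, K) = min{k ∈ ℕ : Σ_{i=0}^{k} K·3^i > (N - K)/2}`. -/
noncomputable def chiK (N K : ℤ) : ℕ :=
  sInf {k : ℕ | (N - K) / 2 < ∑ i ∈ Finset.range (k + 1), K * (3 : ℤ) ^ i}

/-- The closed-form optimal pilot assignment vector of Theorem 3:
`p'_i = Σ_{s=0}^{i} K·3^s - (N-K)/2` if `i = χ(N,K)`,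
`p'_i = 3·((N-K)/2 - Σ_{s=0}^{i-2} K·3^s)` if `i = χ(N,K) + 1 ≤ m-1`,
and `p'_i = 0` otherwise. -/
noncomputable def poptK (m : ℕ) (K N : ℤ) : Fin m → ℤ := fun i =>
  if (i : ℕ) = chiK N K then (∑ s ∈ Finset.range (chiK N K + 1), K * 3 ^ s) - (N - K) / 2
  else if (i : ℕ) = chiK N K + 1 then
    3 * ((N - K) / 2 - ∑ s ∈ Finset.range (chiK N K), K * 3 ^ s)
  else 0


/-! For all integers `i, c ≥ 0`, `i ≤ c - 1/2 + 3^{i-c}/2`, with equality at `i = c` and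
`i = c + 1`. Multiplying by `d·p_i·3^{-i} ≥ 0` and summing bounds `C_sum(p)` by
`K·(C_0 + (c - 1/2)·d) + N·d/(2·3^c)`, an expression in the two linear constraints defining
`Ω(N, K)` only; every vector supported on `{c, c+1}` attains it. For `c = χ(N, K)` the vector `p'`
is the member of `Ω(N, K)` supported there, its two entries being forced by the constraints. -/

open Finset

/-- `1 + 2t ≤ 3^t` at integers `t`: the chord of `t ↦ 3^t` over `[0, 1]` lies below it. -/
lemma two_mul_sub_add_one_mul_three_pow_le (c i : ℕ) :
    (2 * ((i : ℝ) - c) + 1) * 3 ^ c ≤ 3 ^ i := by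
  rcases le_or_gt c i with hci | hic
  · obtain ⟨j, rfl⟩ := Nat.exists_eq_add_of_le hci
    have hj := one_add_mul_le_pow (show (-2 : ℝ) ≤ 2 by norm_num) j
    have hsub : ((c + j : ℕ) : ℝ) - c = j := by push_cast; ring
    rw [hsub, pow_add]
    norm_num at hj
    nlinarith [pow_pos (show (0 : ℝ) < 3 by norm_num) c]
  · have : (i : ℝ) + 1 ≤ c := by exact_mod_cast hic
    have h3c : (0 : ℝ) < 3 ^ c := by positivity
    have h3i : (0 : ℝ) < 3 ^ i := by positivity
    nlinarith

section RateBound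

variable (C0 d x : ℝ) (c i : ℕ)

noncomputable def rateBound : ℝ :=
  x / 3 ^ i * (C0 + (c - 1 / 2) * d) + x * (d / (2 * 3 ^ c))

lemma rateBound_sub_eq :
    rateBound C0 d x c i - x / 3 ^ i * (C0 + i * d)
      = x * d / (2 * 3 ^ i * 3 ^ c) * (3 ^ i - (2 * ((i : ℝ) - c) + 1) * 3 ^ c) := by
  unfold rateBound
  field_simp
  ring

variable {C0 d x}

lemma le_rateBound (hx : 0 ≤ x) (hd : 0 ≤ d) :
    x / 3 ^ i * (C0 + i * d) ≤ rateBound C0 d x c i := by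
  have h := rateBound_sub_eq C0 d x c i
  have := two_mul_sub_add_one_mul_three_pow_le c i
  have : 0 ≤ x * d / (2 * 3 ^ i * 3 ^ c) := by positivity
  nlinarith

lemma eq_rateBound {c i : ℕ} (hi : i = c ∨ i = c + 1) :
    x / 3 ^ i * (C0 + i * d) = rateBound C0 d x c i := by
  have h := rateBound_sub_eq C0 d x c i
  have : (3 : ℝ) ^ i - (2 * ((i : ℝ) - c) + 1) * 3 ^ c = 0 := by
    rcases hi with rfl | rfl
    · ring
    · push_cast; ring
  rw [this, mul_zero] at h
  linarith

end RateBound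

lemma sum_rateBound {m : ℕ} (C0 d : ℝ) (c : ℕ) (p : Fin m → ℤ) :
    ∑ i : Fin m, rateBound C0 d (p i) c i
      = (∑ i, (p i : ℝ) / 3 ^ (i : ℕ)) * (C0 + (c - 1 / 2) * d)
        + (Npil p : ℝ) * (d / (2 * 3 ^ c)) := by
  simp only [rateBound, Npil, sum_add_distrib, sum_mul, Int.cast_sum]

theorem Csum_le_Csum_of_support_subset {m : ℕ} {C0 d : ℝ} (hd : 0 ≤ d) (c : ℕ)
    {p q : Fin m → ℤ} (hp : ∀ i, 0 ≤ p i)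
    (hq : ∀ i : Fin m, (i : ℕ) ≠ c → (i : ℕ) ≠ c + 1 → q i = 0)
    (hweight : ∑ i, (p i : ℝ) / 3 ^ (i : ℕ) = ∑ i, (q i : ℝ) / 3 ^ (i : ℕ))
    (hlength : Npil p = Npil q) :
    Csum C0 d p ≤ Csum C0 d q := by
  have hq_eq : ∀ i : Fin m,
      (q i : ℝ) / 3 ^ (i : ℕ) * (C0 + (i : ℕ) * d) = rateBound C0 d (q i) c i := by
    intro i
    by_cases hi : (i : ℕ) = c ∨ (i : ℕ) = c + 1
    · exact eq_rateBound hi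
    · push Not at hi
      simp [hq i hi.1 hi.2, rateBound]
  calc Csum C0 d p ≤ ∑ i : Fin m, rateBound C0 d (p i) c i :=
        sum_le_sum fun i _ => le_rateBound c i (by exact_mod_cast hp i) hd
    _ = ∑ i : Fin m, rateBound C0 d (q i) c i := by
        rw [sum_rateBound, sum_rateBound, hweight, hlength]
    _ = Csum C0 d q := (sum_congr rfl fun i _ => hq_eq i).symm

lemma two_mul_sum_range_mul_three_pow (K : ℤ) (n : ℕ) :
    2 * ∑ i ∈ range n, K * 3 ^ i = K * 3 ^ n - K := by
  rw [← mul_sum]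
  linear_combination K * geom_sum_mul (3 : ℤ) n

lemma chiK_spec {N K : ℤ} {n : ℕ} (h0 : 0 ≤ (N - K) / 2)
    (hn : (N - K) / 2 < ∑ i ∈ range (n + 1), K * 3 ^ i) :
    chiK N K ≤ n ∧ ∑ i ∈ range (chiK N K), K * 3 ^ i ≤ (N - K) / 2 ∧
      (N - K) / 2 < ∑ i ∈ range (chiK N K + 1), K * 3 ^ i := by
  refine ⟨Nat.sInf_le hn, ?_,
    Nat.sInf_mem (s := {k : ℕ | (N - K) / 2 < ∑ i ∈ range (k + 1), K * 3 ^ i}) ⟨n, hn⟩⟩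
  rcases h : chiK N K with _ | k
  · simpa using h0
  · exact not_lt.mp (Nat.notMem_of_lt_sInf (show k < chiK N K by omega))

section poptK

variable {m : ℕ} {K N : ℤ} {c : ℕ} {i : Fin m}

lemma poptK_of_eq_chiK (hc : chiK N K = c) (h : (i : ℕ) = c) :
    poptK m K N i = (∑ s ∈ range (c + 1), K * 3 ^ s) - (N - K) / 2 := by
  simp [poptK, h, hc]

lemma poptK_of_eq_chiK_add_one (hc : chiK N K = c) (h : (i : ℕ) = c + 1) :
    poptK m K N i = 3 * ((N - K) / 2 - ∑ s ∈ range c, K * 3 ^ s) := by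
  simp [poptK, h, hc]

lemma poptK_eq_zero (h : (i : ℕ) ≠ chiK N K) (h' : (i : ℕ) ≠ chiK N K + 1) :
    poptK m K N i = 0 := by
  simp [poptK, h, h']

lemma sum_mul_poptK {R : Type*} [CommRing R] (w : ℕ → R) (hc : chiK N K = c)
    (hm : c < m)
    (hlast : c + 1 < m ∨ (N - K) / 2 = ∑ s ∈ range c, K * 3 ^ s) :
    ∑ i : Fin m, w i * (poptK m K N i : R)
      = w c * (((∑ s ∈ range (c + 1), K * 3 ^ s) - (N - K) / 2 : ℤ) : R)
        + w (c + 1) * ((3 * ((N - K) / 2 - ∑ s ∈ range c, K * 3 ^ s) : ℤ) : R) := by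
  set A : ℤ := (∑ s ∈ range (c + 1), K * 3 ^ s) - (N - K) / 2 with hA
  set B : ℤ := 3 * ((N - K) / 2 - ∑ s ∈ range c, K * 3 ^ s) with hB
  have hsplit : ∀ i : Fin m, w i * (poptK m K N i : R)
      = (if (i : ℕ) = c then w c * A else 0)
        + (if (i : ℕ) = c + 1 then w (c + 1) * B else 0) := by
    intro i
    by_cases hi : (i : ℕ) = c
    · simp [poptK_of_eq_chiK hc hi, hi, hA]
    by_cases hi' : (i : ℕ) = c + 1
    · simp [poptK_of_eq_chiK_add_one hc hi', hi', hB]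
    · simp [poptK_eq_zero (hc ▸ hi) (hc ▸ hi'), hi, hi']
  rw [sum_congr rfl fun i _ => hsplit i, sum_add_distrib,
    Fin.sum_univ_eq_sum_range (fun j => if j = c then _ else 0),
    Fin.sum_univ_eq_sum_range (fun j => if j = c + 1 then _ else 0),
    sum_ite_eq', sum_ite_eq', if_pos (mem_range.mpr hm)]
  rcases hlast with hlast | hlast
  · rw [if_pos (mem_range.mpr hlast)]
  · simp [hB, hlast]

end poptK

theorem poptK_mem {m K : ℕ} {N : ℤ} (hm : 1 ≤ m) (hK : 1 ≤ K) (hpar : N ≡ K [ZMOD 2])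
    (hKN : (K : ℤ) ≤ N) (hN : N ≤ (K : ℤ) * 3 ^ (m - 1)) :
    validPK K (poptK m K N) ∧ Npil (poptK m K N) = N := by
  have hM : 2 * ((N - K) / 2) = N - K := Int.mul_ediv_cancel' hpar.symm.dvd
  have hS := two_mul_sum_range_mul_three_pow (K : ℤ)
  have h3m : (K : ℤ) * 3 ^ m = 3 * (K * 3 ^ (m - 1)) := by
    rw [← Nat.sub_add_cancel hm, pow_succ, Nat.add_sub_cancel]; ring
  obtain ⟨hcm, hlow, hhigh⟩ := chiK_spec (N := N) (K := K) (n := m - 1) (by omega) (by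
    rw [Nat.sub_add_cancel hm]
    have := hS m
    omega)
  obtain ⟨c, hc_def⟩ : ∃ c, chiK N K = c := ⟨_, rfl⟩
  rw [hc_def] at hcm hlow hhigh
  have hlast : c + 1 < m ∨ (N - K) / 2 = ∑ s ∈ range c, (K : ℤ) * 3 ^ s := by
    refine or_iff_not_imp_left.mpr fun hc => ?_
    have := hS c
    rw [show c = m - 1 by omega] at hlow this ⊢
    omega
  have hsucc : ∑ s ∈ range (c + 1), (K : ℤ) * 3 ^ s
      = ∑ s ∈ range c, (K : ℤ) * 3 ^ s + K * 3 ^ c := sum_range_succ _ c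
  refine ⟨⟨fun i => ?_, ?_⟩, ?_⟩
  · have hpow : (K : ℤ) * 3 ^ (c + 1) = 3 * (K * 3 ^ c) := by ring
    by_cases hc : (i : ℕ) = c
    · rw [poptK_of_eq_chiK hc_def hc, hc]
      constructor <;> linarith
    by_cases hc' : (i : ℕ) = c + 1
    · rw [poptK_of_eq_chiK_add_one hc_def hc', hc']
      constructor <;> linarith
    · rw [poptK_eq_zero (hc_def ▸ hc) (hc_def ▸ hc')]
      exact ⟨le_rfl, by positivity⟩
  · simp_rw [div_eq_inv_mul]
    rw [sum_mul_poptK (fun j => ((3 : ℝ) ^ j)⁻¹) hc_def (by omega) hlast]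
    have hsuccR : (∑ s ∈ range (c + 1), (K : ℝ) * 3 ^ s)
        = ∑ s ∈ range c, (K : ℝ) * 3 ^ s + K * 3 ^ c := by exact_mod_cast hsucc
    push_cast
    rw [hsuccR, pow_succ, mul_inv]
    field_simp
    ring
  · have hsum := sum_mul_poptK (R := ℤ) (fun _ => 1) hc_def (by omega) hlast
    simp only [one_mul, Int.cast_id] at hsum
    rw [Npil, hsum]
    linarith [hS c]

theorem theorem3_optimal_fixed_length_multiuser_general (m : ℕ) (hm : 2 ≤ m)
    (K : ℕ) (hK : 1 ≤ K) (C0 d : ℝ) (hd : 0 < d)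
    (Np0 : ℤ) (hpar : Np0 ≡ (K : ℤ) [ZMOD 2])
    (h1 : (K : ℤ) ≤ Np0) (h2 : Np0 ≤ (K : ℤ) * 3 ^ (m - 1)) :
    (validPK K (poptK m K Np0) ∧ Npil (poptK m K Np0) = Np0) ∧
    ∀ p : Fin m → ℤ, validPK K p → Npil p = Np0 →
      Csum C0 d p ≤ Csum C0 d (poptK m K Np0) := by
  have hmem := poptK_mem (by omega) hK hpar h1 h2
  refine ⟨hmem, fun p hp hlength => ?_⟩
  exact Csum_le_Csum_of_support_subset hd.le (chiK Np0 K) (fun i => (hp.1 i).1)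
    (fun _ => poptK_eq_zero) (hp.2.trans hmem.1.2.symm) (hlength.trans hmem.2.symm)

/-- Theorem 3: for `N_p0 ≡ K (mod 2)` with `K ≤ N_p0 ≤ K·3^{m-1}`, the
closed-form vector `p'` belongs to `Ω(N_p0, K)` and maximizes `C_sum` there. -/
theorem theorem3_optimal_fixed_length_multiuser (m : ℕ) (hm : 2 ≤ m)
    (K : ℕ) (hK : 1 ≤ K) (C0 d : ℝ) (hC0 : 0 < C0) (hd : 0 < d)
    (Np0 : ℤ) (hpar : Np0 ≡ (K : ℤ) [ZMOD 2])
    (h1 : (K : ℤ) ≤ Np0) (h2 : Np0 ≤ (K : ℤ) * 3 ^ (m - 1)) :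
    (validPK K (poptK m K Np0) ∧ Npil (poptK m K Np0) = Np0) ∧
    ∀ p : Fin m → ℤ, validPK K p → Npil p = Np0 →
      Csum C0 d p ≤ Csum C0 d (poptK m K Np0) :=
  theorem3_optimal_fixed_length_multiuser_general m hm K hK C0 d hd Np0 hpar h1 h2
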